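/- For every prime number p, the set T = T₁ ∪ {wₙ} is the p-gluing of T₁ and {wₙ}; concretely: ℤT₁ ∩ ℤ{wₙ} = ℤ{wₙ}, and there exists α ∈ ℕ such that p^α·wₙ ∈ ℕT₁ ∩ ℕ{wₙ}. -/

import Mathlib

/-! The vector `wₙ` is an integral combination of `fg·(e₁+⋯+e_{n-1})`, `fg·eₙ` and
`(f-g)·(e₁+⋯+e_{n-1} + (n-1)eₙ)`, which lie in `ℕT₁`. For `N ≥ (f-1)²`, writing
`N = kf - r` with `0 ≤ r < f`, the combination expressing `N·wₙ` has nonnegative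
coefficients, so every large multiple of `wₙ` lies in `ℕT₁`. Two consecutive ones give
`wₙ ∈ ℤT₁`, and `p^α` is eventually large. -/

open Filter

theorem AddSubgroup.mem_closure_of_eventually_nsmul_mem {M : Type*} [AddGroup M] {T : Set M}
    {x : M} (h : ∀ᶠ N : ℕ in atTop, N • x ∈ AddSubmonoid.closure T) :
    x ∈ AddSubgroup.closure T := by
  obtain ⟨N, hN⟩ := eventually_atTop.1 h
  have hle : AddSubmonoid.closure T ≤ (AddSubgroup.closure T).toAddSubmonoid :=
    AddSubmonoid.closure_le.2 AddSubgroup.subset_closure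
  have hsucc : (N + 1) • x ∈ AddSubgroup.closure T := hle (hN _ N.le_succ)
  rw [succ_nsmul] at hsucc
  simpa using AddSubgroup.add_mem _ (AddSubgroup.neg_mem _ (hle (hN N le_rfl))) hsucc

theorem AddSubmonoid.zsmul_mem_of_nonneg {M : Type*} [AddGroup M] (S : AddSubmonoid M)
    {c : ℤ} (hc : 0 ≤ c) {x : M} (hx : x ∈ S) : c • x ∈ S := by
  lift c to ℕ using hc
  rw [natCast_zsmul]
  exact nsmul_mem hx c

theorem Int.exists_le_mul_le_add_sub_one {N f : ℤ} (hf : 0 < f) :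
    ∃ k : ℤ, N ≤ k * f ∧ k * f ≤ N + f - 1 :=
  ⟨(N - 1) / f + 1, by linarith [Int.lt_ediv_add_one_mul_self (N - 1) hf],
    by linarith [Int.ediv_mul_le (N - 1) hf.ne']⟩

theorem sub_two_mul_lt_sub_one_mul {n f g : ℤ} (hn : 0 < n) (hf : 0 < f)
    (hng : (n - 1) * f ≤ n * g) : (n - 2) * f < (n - 1) * g := by
  refine lt_of_mul_lt_mul_left ?_ hn.le
  calc n * ((n - 2) * f) < (n - 1) * ((n - 1) * f) := by nlinarith
    _ ≤ (n - 1) * (n * g) := by gcongr; linarith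
    _ = n * ((n - 1) * g) := by ring

theorem exists_gluing_coeffs {n f g N : ℤ} (hn : 2 ≤ n) (hf : 0 < f) (hgf : g ≤ f)
    (hng : (n - 1) * f ≤ n * g) (hN : (f - 1) ^ 2 ≤ N) :
    ∃ k : ℤ, N ≤ k * f ∧ 0 ≤ k * (f - g) ∧ (n - 1) * (k * (f - g)) ≤ N := by
  have hgap : (n - 1) * (f - g) ≤ f - 1 := by
    linarith [sub_two_mul_lt_sub_one_mul (by omega) hf hng]
  obtain ⟨k, hk₁, hk₂⟩ := Int.exists_le_mul_le_add_sub_one (N := N) hf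
  have hk : 0 ≤ k := by nlinarith
  have hkf : k * (f - 1) ≤ N := by
    refine le_of_mul_le_mul_left ?_ hf
    nlinarith [mul_le_mul_of_nonneg_right hk₂ (show 0 ≤ f - 1 by linarith)]
  refine ⟨k, hk₁, mul_nonneg hk (by linarith), ?_⟩
  calc (n - 1) * (k * (f - g)) = k * ((n - 1) * (f - g)) := by ring
    _ ≤ k * (f - 1) := by gcongr
    _ ≤ N := hkf

theorem eventually_nsmul_mem_closure {M : Type*} [AddCommGroup M] {T : Set M} {S ℓ x : M}
    {n f g : ℤ} (hn : 2 ≤ n) (hg : 0 ≤ g) (hgf : g < f) (hng : (n - 1) * f ≤ n * g)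
    (hS : (f * g) • S ∈ AddSubmonoid.closure T)
    (hℓ : (f * g) • ℓ ∈ AddSubmonoid.closure T)
    (hSℓ : (f - g) • (S + (n - 1) • ℓ) ∈ AddSubmonoid.closure T)
    (hx : x = g ^ 2 • S + (g * ((n - 1) * g - (n - 2) * f)) • ℓ) :
    ∀ᶠ N : ℕ in atTop, N • x ∈ AddSubmonoid.closure T := by
  refine eventually_atTop.2 ⟨((f - 1) ^ 2).toNat, fun N hN => ?_⟩
  obtain ⟨k, hk₁, hk₂, hk₃⟩ := exists_gluing_coeffs (N := N) hn (by omega) hgf.le hng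
    (by have := Int.self_le_toNat ((f - 1) ^ 2); omega)
  have hcomb : (N : ℤ) • x = (N - k * (f - g)) • ((f * g) • S) +
      (g * (k * f - N)) • ((f - g) • (S + (n - 1) • ℓ)) +
      (N - (n - 1) * (k * (f - g))) • ((f * g) • ℓ) := by
    rw [hx]; module
  rw [← natCast_zsmul, hcomb]
  refine add_mem (add_mem ?_ ?_) ?_ <;> refine AddSubmonoid.zsmul_mem_of_nonneg _ ?_ ‹_›
  · nlinarith
  · nlinarith
  · linarith

/-- In the setting of the paper (`n ≥ 3`, coprime `f > g > 0`,
`(n-1)f ≤ ng`), for every prime `p` the set `T = T₁ ∪ {wₙ}` is the `p`-gluing of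
`T₁ = {v₁,…,vₙ,w₁,…,w_{n-1}}` and `{wₙ}`; concretely: `ℤT₁ ∩ ℤ{wₙ} = ℤ{wₙ}` and there
is `α ∈ ℕ` with `p^α·wₙ ∈ ℕT₁ ∩ ℕ{wₙ}`. -/
theorem stmt5 (n : ℕ) (hn : 3 ≤ n) (f g : ℕ)
    (hgf : g < f) (hng : (n - 1) * f ≤ n * g)
    (v : Fin n → Fin n → ℤ)
    (hv : ∀ i : Fin n, v i = Pi.single i ((f * g : ℕ) : ℤ))
    (w : Fin (n - 1) → Fin n → ℤ)
    (hw : ∀ i : Fin (n - 1), w i = ((f : ℤ) - (g : ℤ)) •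
      (Pi.single (Fin.castLE (by omega) i) (1 : ℤ) +
        Pi.single (⟨n - 1, by omega⟩ : Fin n) (1 : ℤ)))
    (wn : Fin n → ℤ)
    (hwn : wn = (g : ℤ) ^ 2 •
        (∑ i : Fin (n - 1), Pi.single (Fin.castLE (by omega) i) (1 : ℤ) : Fin n → ℤ) +
      ((g : ℤ) * (((n : ℤ) - 1) * (g : ℤ) - ((n : ℤ) - 2) * (f : ℤ))) •
        Pi.single (⟨n - 1, by omega⟩ : Fin n) (1 : ℤ)) :
    ∀ p : ℕ, p.Prime →
      (AddSubgroup.closure (Set.range v ∪ Set.range w) ⊓ AddSubgroup.closure {wn} =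
        AddSubgroup.closure {wn}) ∧
      ∃ α : ℕ, ((p ^ α : ℕ) : ℤ) • wn ∈
        AddSubmonoid.closure (Set.range v ∪ Set.range w) ⊓ AddSubmonoid.closure {wn} := by
  intro p hp
  set T := Set.range v ∪ Set.range w
  have hT : T ⊆ AddSubmonoid.closure T := AddSubmonoid.subset_closure
  set S : Fin n → ℤ := ∑ i : Fin (n - 1), Pi.single (Fin.castLE (by omega) i) 1
  set ℓ : Fin n → ℤ := Pi.single ⟨n - 1, by omega⟩ 1
  have hv' : ∀ i, v i = ((f : ℤ) * g) • Pi.single i 1 := fun i => by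
    rw [hv, ← Pi.single_smul, smul_eq_mul, mul_one, Nat.cast_mul]
  have hS : ((f : ℤ) * g) • S ∈ AddSubmonoid.closure T := by
    rw [Finset.smul_sum]
    exact sum_mem fun i _ => hv' (Fin.castLE _ i) ▸ hT (Or.inl ⟨_, rfl⟩)
  have hℓ : ((f : ℤ) * g) • ℓ ∈ AddSubmonoid.closure T :=
    hv' _ ▸ hT (Or.inl ⟨_, rfl⟩)
  have hSℓ : ((f : ℤ) - g) • (S + ((n : ℤ) - 1) • ℓ) ∈ AddSubmonoid.closure T := by
    have hsum : ∑ i, w i = ((f : ℤ) - g) • (S + ((n : ℤ) - 1) • ℓ) := by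
      simp only [hw, S, ℓ, ← Finset.smul_sum, Finset.sum_add_distrib, Finset.sum_const,
        Finset.card_univ, Fintype.card_fin, ← natCast_zsmul]
      push_cast [show 1 ≤ n by omega]
      rfl
    exact hsum ▸ sum_mem fun i _ => hT (Or.inr ⟨i, rfl⟩)
  zify [show 1 ≤ n by omega] at hng
  have hmult := eventually_nsmul_mem_closure (n := n) (by omega) (Int.natCast_nonneg g)
    (by exact_mod_cast hgf) hng hS hℓ hSℓ hwn
  refine ⟨inf_eq_right.2 ((AddSubgroup.closure_le _).2 (Set.singleton_subset_iff.2
    (AddSubgroup.mem_closure_of_eventually_nsmul_mem hmult))), ?_⟩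
  obtain ⟨α, hα⟩ := ((tendsto_pow_atTop_atTop_of_one_lt hp.one_lt).eventually hmult).exists
  refine ⟨α, AddSubmonoid.mem_inf.2 ⟨?_, ?_⟩⟩ <;> rw [natCast_zsmul]
  · exact hα
  · exact nsmul_mem (AddSubmonoid.subset_closure (Set.mem_singleton wn)) _
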